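/- Let ζ be the circular Kesten operator associated with (β₁, β₂). Then for every m ≥ 1 and all ε₁,…,ε_m ∈ {1,*}: Ψ₁(ζ^{ε₁}⋯ζ^{ε_m}) = Σ_π Π_{π_k ∈ blocks(π)} β_{min(𝔡(π_k),2)}, where the sum ranges over all noncrossing pair partitions π of {1,…,m} whose every block {i,j} satisfies ε_i ≠ ε_j, and 𝔡(π_k) denotes the depth of the block π_k (in particular the moment vanishes when m is odd). -/

import Mathlib

/-!
On the vectors reachable from `Ω₁`, the four creation operators act on stacks of labels: `ζ`
pushes `u′` and pops `u″`, `ζ*` pushes `u″` and pops `u′`, and a step between the empty stack and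
a one-letter stack has weight `√β₁`, any other step `√β₂`. Moving the factors of
`⟨ζ^{ε₁}⋯ζ^{ε_m}Ω₁, Ω₁⟩` across the inner product one at a time therefore turns the moment into a
weighted count of the walks from the empty stack back to itself driven by `ε₁, …, ε_m`. Pairing each push with the pop that
undoes it gives a noncrossing pair partition adapted to `ε`, the block weight `β₁` or `β₂`
recording whether the block is outermost. Both sides obey the same recursion: the first position
that closes a block closes it with its predecessor, and deleting this adjacent pair costs `β₁` if
it starts at position `1` and `β₂` otherwise.
-/

noncomputable section

/-- A letter of a word in the matricially free Fock space of tracial type. -/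
abbrev MLetter (r : ℕ) (L : Type*) := (Fin r × Fin r) × L

/-- A finite nonempty chained word with letters in `J × L`. -/
structure MWord (r : ℕ) (J : Set (Fin r × Fin r)) (L : Type*) where
  head : MLetter r L
  tail : List (MLetter r L)
  headJ : head.1 ∈ J
  tailJ : ∀ x ∈ tail, x.1 ∈ J
  chain : List.Chain' (fun a b : MLetter r L => a.1.2 = b.1.1) (head :: tail)

/-- Canonical orthonormal basis index set: vacua `Ω₁,…,Ω_r` and the words. -/
abbrev MBasis (r : ℕ) (J : Set (Fin r × Fin r)) (L : Type*) := (Fin r) ⊕ (MWord r J L)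

/-- The matricially free Fock space of tracial type, `ℓ²` of the basis set. -/
abbrev MSpace (r : ℕ) (J : Set (Fin r × Fin r)) (L : Type*) :=
  lp (fun _ : MBasis r J L => ℂ) 2

/-- Canonical basis vector. -/
def mvec {r : ℕ} {J : Set (Fin r × Fin r)} {L : Type*} (i : MBasis r J L) : MSpace r J L := by
  classical exact lp.single 2 i 1

/-- The vacuum vector `Ω_q`. -/
def vac {r : ℕ} {J : Set (Fin r × Fin r)} {L : Type*} (q : Fin r) : MSpace r J L :=
  mvec (Sum.inl q)

/-- Basis vector of a word. -/
def wvec {r : ℕ} {J : Set (Fin r × Fin r)} {L : Type*} (w : MWord r J L) : MSpace r J L :=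
  mvec (Sum.inr w)

/-- The single-letter word. -/
def MWord.single {r : ℕ} {J : Set (Fin r × Fin r)} {L : Type*}
    (x : MLetter r L) (hx : x.1 ∈ J) : MWord r J L :=
  ⟨x, [], hx, (by intro y hy; cases hy), List.isChain_singleton _⟩

/-- Prepending a letter to a word. -/
def MWord.cons {r : ℕ} {J : Set (Fin r × Fin r)} {L : Type*}
    (x : MLetter r L) (hx : x.1 ∈ J) (w : MWord r J L)
    (hc : x.1.2 = w.head.1.1) : MWord r J L :=
  ⟨x, w.head :: w.tail, hx, by
      intro y hy
      rcases List.mem_cons.mp hy with h | h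
      · exact h ▸ w.headJ
      · exact w.tailJ y h,
    List.isChain_cons_cons.mpr ⟨hc, w.chain⟩⟩

/-- `T` is the matricially free creation operator `℘_{p,q}(l)` with covariance `b`:
it maps `Ω_q` to `√b·((p,q,l))`, each word starting with first index `q` to `√b` times the
word with `((p,q),l)` prepended, and all other canonical basis vectors to `0`. -/
def IsMFCreation {r : ℕ} {J : Set (Fin r × Fin r)} {L : Type*}
    (b : ℝ) (p q : Fin r) (l : L) (hpq : ((p, q) : Fin r × Fin r) ∈ J)
    (T : MSpace r J L →L[ℂ] MSpace r J L) : Prop :=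
  T (vac q) = (Real.sqrt b : ℂ) • wvec (MWord.single ((p, q), l) hpq) ∧
  (∀ q' : Fin r, q' ≠ q → T (vac q') = 0) ∧
  (∀ (w : MWord r J L) (h : w.head.1.1 = q),
      T (wvec w) = (Real.sqrt b : ℂ) • wvec (MWord.cons ((p, q), l) hpq w h.symm)) ∧
  (∀ w : MWord r J L, w.head.1.1 ≠ q → T (wvec w) = 0)

/-- The vector state `Ψ_q(a) = ⟨aΩ_q, Ω_q⟩`. -/
def PsiM {r : ℕ} {J : Set (Fin r × Fin r)} {L : Type*} (q : Fin r)
    (a : MSpace r J L →L[ℂ] MSpace r J L) : ℂ :=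
  @inner ℂ _ _ (vac q : MSpace r J L) (a (vac q))

end
/-- `x^ε` for `ε ∈ {1, *}`: `x^1 = x` (encoded `true`) and `x^* = adjoint x` (encoded `false`). -/
noncomputable def sOp {H : Type*} [NormedAddCommGroup H] [InnerProductSpace ℂ H]
    [CompleteSpace H] (ε : Bool) (x : H →L[ℂ] H) : H →L[ℂ] H :=
  if ε then x else ContinuousLinearMap.adjoint x

noncomputable section

/-- `J = {(2,1), (2,2)}` (with `1,2` encoded as `0,1 : Fin 2`). -/
def JK : Set (Fin 2 × Fin 2) := {x | x = (1, 0) ∨ x = (1, 1)}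

lemma JK21 : ((1, 0) : Fin 2 × Fin 2) ∈ JK := Or.inl rfl
lemma JK22 : ((1, 1) : Fin 2 × Fin 2) ∈ JK := Or.inr rfl

variable {m : ℕ}

/-- `σ` encodes a noncrossing pair partition of `{1,…,m}` (blocks `{i, σ i}`) all of whose
blocks `{i,j}` satisfy `ε_i ≠ ε_j`. -/
def IsAdaptedPairPartition (σ : Fin m → Fin m) (ε : Fin m → Bool) : Prop :=
  (∀ i, σ (σ i) = i) ∧ (∀ i, σ i ≠ i) ∧
  (¬ ∃ i j : Fin m, i < j ∧ j < σ i ∧ σ i < σ j) ∧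
  (∀ i : Fin m, i < σ i → ε i ≠ ε (σ i))

/-- The number of blocks outer to the block `{i, σ i}` (with `i < σ i`); the depth of the
block is this number plus one. -/
def outerCount (σ : Fin m → Fin m) (i : Fin m) : ℕ :=
  (Finset.univ.filter (fun j => j < σ j ∧ j < i ∧ σ i < σ j)).card

end

open scoped ComplexConjugate InnerProductSpace
open Classical

section FockSpace

variable {r : ℕ} {J : Set (Fin r × Fin r)} {L : Type*}

theorem mvec_apply (i j : MBasis r J L) :
    (mvec i : MSpace r J L) j = if j = i then 1 else 0 := by
  rw [mvec, lp.single_apply, Pi.single_apply]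

theorem inner_mvec_left (i : MBasis r J L) (f : MSpace r J L) : ⟪mvec i, f⟫_ℂ = f i := by
  simp [mvec, lp.inner_single_left]

theorem inner_mvec_mvec (i j : MBasis r J L) :
    ⟪mvec i, (mvec j : MSpace r J L)⟫_ℂ = if i = j then 1 else 0 := by
  rw [inner_mvec_left, mvec_apply]

theorem ext_inner_mvec {x y : MSpace r J L} (h : ∀ i, ⟪mvec i, x⟫_ℂ = ⟪mvec i, y⟫_ℂ) :
    x = y :=
  lp.ext <| funext fun i => by rw [← inner_mvec_left, ← inner_mvec_left, h]

theorem MWord.ext {w w' : MWord r J L} (hhead : w.head = w'.head) (htail : w.tail = w'.tail) :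
    w = w' := by
  cases w; cases w'; cases hhead; cases htail; rfl

theorem MWord.cons_ne_single {x y : MLetter r L} {hx : x.1 ∈ J} {hy : y.1 ∈ J}
    {w : MWord r J L} {hc : x.1.2 = w.head.1.1} : MWord.cons x hx w hc ≠ MWord.single y hy :=
  fun h => List.cons_ne_nil _ _ (congrArg MWord.tail h)

theorem MWord.single_inj {x y : MLetter r L} {hx : x.1 ∈ J} {hy : y.1 ∈ J} :
    MWord.single x hx = MWord.single y hy ↔ x = y :=
  ⟨congrArg MWord.head, fun h => MWord.ext h rfl⟩

theorem MWord.cons_inj {x y : MLetter r L} {hx : x.1 ∈ J} {hy : y.1 ∈ J} {w w' : MWord r J L}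
    {hc : x.1.2 = w.head.1.1} {hc' : y.1.2 = w'.head.1.1} :
    MWord.cons x hx w hc = MWord.cons y hy w' hc' ↔ x = y ∧ w = w' := by
  refine ⟨fun h => ?_, by rintro ⟨rfl, rfl⟩; rfl⟩
  obtain ⟨hh, ht⟩ := List.cons.inj (congrArg MWord.tail h)
  exact ⟨congrArg MWord.head h, MWord.ext hh ht⟩

/-- The basis vector onto which `℘_{p,q}(l)` maps a basis vector, if it does not kill it. -/
def mfShift (p q : Fin r) (l : L) (hpq : ((p, q) : Fin r × Fin r) ∈ J) :
    MBasis r J L → Option (MBasis r J L)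
  | .inl q' => if q' = q then some (.inr (MWord.single ((p, q), l) hpq)) else none
  | .inr w => if h : w.head.1.1 = q then some (.inr (MWord.cons ((p, q), l) hpq w h.symm))
      else none

section mfShift

variable {p q : Fin r} {l : L} {hpq : ((p, q) : Fin r × Fin r) ∈ J}

theorem mfShift_ne_some_inl (k : MBasis r J L) (q' : Fin r) :
    mfShift p q l hpq k ≠ some (.inl q') := by
  cases k <;> simp only [mfShift] <;> split_ifs <;> simp

theorem mfShift_injective {k k' j : MBasis r J L} (h : mfShift p q l hpq k = some j)
    (h' : mfShift p q l hpq k' = some j) : k = k' := by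
  rcases k with q₁ | w₁ <;> rcases k' with q₂ | w₂ <;> simp only [mfShift] at h h' <;>
    split_ifs at h h' <;> simp only [Option.some.injEq] at h h' <;> subst h <;>
    simp_all [MWord.cons_ne_single, MWord.cons_ne_single.symm, MWord.cons_inj]

variable {b : ℝ} {T : MSpace r J L →L[ℂ] MSpace r J L}

theorem IsMFCreation.apply_mvec (hT : IsMFCreation b p q l hpq T) (k : MBasis r J L) :
    T (mvec k) = (mfShift p q l hpq k).elim 0 fun j => (Real.sqrt b : ℂ) • mvec j := by
  rcases k with q' | w
  · by_cases h : q' = q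
    · subst h; simpa [mfShift, vac, wvec] using hT.1
    · simpa [mfShift, h, vac, wvec] using hT.2.1 q' h
  · by_cases h : w.head.1.1 = q
    · simpa [mfShift, h, vac, wvec] using hT.2.2.1 w h
    · simpa [mfShift, h, vac, wvec] using hT.2.2.2 w h

theorem IsMFCreation.inner_mvec_apply_mvec (hT : IsMFCreation b p q l hpq T)
    (j k : MBasis r J L) :
    ⟪mvec j, T (mvec k)⟫_ℂ = if mfShift p q l hpq k = some j then (Real.sqrt b : ℂ) else 0 := by
  rw [hT.apply_mvec]
  cases mfShift p q l hpq k <;> simp [inner_mvec_mvec, eq_comm]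

theorem IsMFCreation.inner_mvec_adjoint_apply_mvec (hT : IsMFCreation b p q l hpq T)
    (i j : MBasis r J L) :
    ⟪mvec i, ContinuousLinearMap.adjoint T (mvec j)⟫_ℂ
      = if mfShift p q l hpq i = some j then (Real.sqrt b : ℂ) else 0 := by
  rw [ContinuousLinearMap.adjoint_inner_right, ← inner_conj_symm, hT.inner_mvec_apply_mvec]
  split_ifs <;> simp [Complex.conj_ofReal]

theorem IsMFCreation.adjoint_apply_mvec (hT : IsMFCreation b p q l hpq T) {j k : MBasis r J L}
    (h : mfShift p q l hpq k = some j) :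
    ContinuousLinearMap.adjoint T (mvec j) = (Real.sqrt b : ℂ) • mvec k := by
  refine ext_inner_mvec fun i => ?_
  rw [hT.inner_mvec_adjoint_apply_mvec, inner_smul_right, inner_mvec_mvec]
  by_cases hi : i = k
  · simp [hi, h]
  · rw [if_neg fun h' => hi (mfShift_injective h' h), if_neg hi, mul_zero]

theorem IsMFCreation.adjoint_apply_mvec_eq_zero (hT : IsMFCreation b p q l hpq T)
    {j : MBasis r J L} (h : ∀ k, mfShift p q l hpq k ≠ some j) :
    ContinuousLinearMap.adjoint T (mvec j) = 0 := by
  refine ext_inner_mvec fun i => ?_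
  simp [hT.inner_mvec_adjoint_apply_mvec, h i]

end mfShift

end FockSpace

section KestenFockSpace

theorem MWord.head_fst_fst_eq_one (w : MWord 2 JK Bool) : w.head.1.1 = 1 := by
  rcases w.headJ with h | h <;> rw [h]

/-- The stack `[l₁, …, lₖ]` (top first) stands for the word
`((2,2),l₁)⋯((2,2),lₖ₋₁)((2,1),lₖ)`, and `[]` for `Ω₁`. -/
def stackWord : Bool → List Bool → MWord 2 JK Bool
  | l, [] => MWord.single ((1, 0), l) JK21
  | l, l' :: s =>
    MWord.cons ((1, 1), l) JK22 (stackWord l' s) (stackWord l' s).head_fst_fst_eq_one.symm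

def stackBasis : List Bool → MBasis 2 JK Bool
  | [] => .inl 0
  | l :: s => .inr (stackWord l s)

def stackLevel : List Bool → Fin 2
  | [] => 0
  | _ :: _ => 1

theorem mfShift_stackBasis {q : Fin 2} (l : Bool) (hq : ((1, q) : Fin 2 × Fin 2) ∈ JK)
    (t : List Bool) :
    mfShift 1 q l hq (stackBasis t)
      = if stackLevel t = q then some (stackBasis (l :: t)) else none := by
  rcases t with _ | ⟨l', s⟩
  · by_cases h : (0 : Fin 2) = q
    · subst h; simp [mfShift, stackBasis, stackLevel, stackWord]
    · simp [mfShift, stackBasis, stackLevel, h]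
  · have := (stackWord l' s).head_fst_fst_eq_one
    by_cases h : (1 : Fin 2) = q
    · subst h; simp [mfShift, stackBasis, stackLevel, stackWord, this]
    · simp [mfShift, stackBasis, stackLevel, h, this]

theorem mfShift_eq_some_stackBasis_cons_iff {q : Fin 2} {l : Bool}
    {hq : ((1, q) : Fin 2 × Fin 2) ∈ JK} (k : MBasis 2 JK Bool) (l' : Bool) (t : List Bool) :
    mfShift 1 q l hq k = some (stackBasis (l' :: t))
      ↔ k = stackBasis t ∧ l' = l ∧ stackLevel t = q := by
  refine ⟨fun h => ?_, by rintro ⟨rfl, rfl, h⟩; rw [mfShift_stackBasis, if_pos h]⟩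
  rcases k with q' | w <;> rcases t with _ | ⟨l'', s⟩ <;>
    simp only [mfShift, stackBasis, stackWord] at h <;> split_ifs at h with hk <;>
    simp only [Option.some.injEq, Sum.inr.injEq] at h
  · obtain ⟨⟨rfl, rfl⟩, rfl⟩ := Prod.mk.inj (MWord.single_inj.mp h)
    simp_all [stackBasis, stackLevel]
  · exact absurd h.symm MWord.cons_ne_single
  · exact absurd h MWord.cons_ne_single
  · obtain ⟨hx, rfl⟩ := MWord.cons_inj.mp h
    simp_all [stackBasis, stackLevel]

section Creation

variable {b : ℝ} {q : Fin 2} {l : Bool} {hq : ((1, q) : Fin 2 × Fin 2) ∈ JK}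
  {T : MSpace 2 JK Bool →L[ℂ] MSpace 2 JK Bool}

theorem IsMFCreation.apply_stackBasis (hT : IsMFCreation b 1 q l hq T) (t : List Bool) :
    T (mvec (stackBasis t))
      = if stackLevel t = q then (Real.sqrt b : ℂ) • mvec (stackBasis (l :: t)) else 0 := by
  rw [hT.apply_mvec, mfShift_stackBasis]
  split_ifs <;> rfl

theorem IsMFCreation.adjoint_apply_stackBasis_nil (hT : IsMFCreation b 1 q l hq T) :
    ContinuousLinearMap.adjoint T (mvec (stackBasis [])) = 0 :=
  hT.adjoint_apply_mvec_eq_zero fun k => mfShift_ne_some_inl k 0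

theorem IsMFCreation.adjoint_apply_stackBasis_cons (hT : IsMFCreation b 1 q l hq T)
    (l' : Bool) (t : List Bool) :
    ContinuousLinearMap.adjoint T (mvec (stackBasis (l' :: t)))
      = if l' = l ∧ stackLevel t = q then (Real.sqrt b : ℂ) • mvec (stackBasis t) else 0 := by
  split_ifs with h
  · exact hT.adjoint_apply_mvec ((mfShift_eq_some_stackBasis_cons_iff _ _ _).mpr ⟨rfl, h⟩)
  · exact hT.adjoint_apply_mvec_eq_zero fun k hk =>
      h ((mfShift_eq_some_stackBasis_cons_iff _ _ _).mp hk).2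

end Creation

theorem adjoint_sOp {H : Type*} [NormedAddCommGroup H] [InnerProductSpace ℂ H] [CompleteSpace H]
    (ε : Bool) (x : H →L[ℂ] H) : ContinuousLinearMap.adjoint (sOp ε x) = sOp (!ε) x := by
  cases ε <;> simp [sOp, ContinuousLinearMap.adjoint_adjoint]

noncomputable def circularKesten (C21 C21' C22 C22' : MSpace 2 JK Bool →L[ℂ] MSpace 2 JK Bool) :
    MSpace 2 JK Bool →L[ℂ] MSpace 2 JK Bool :=
  C21 + ContinuousLinearMap.adjoint C21' + C22 + ContinuousLinearMap.adjoint C22'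

def levelWeight (β₁ β₂ : ℝ) : List Bool → ℝ
  | [] => β₁
  | _ :: _ => β₂

section KestenAction

variable {β₁ β₂ : ℝ} {C21 C21' C22 C22' : MSpace 2 JK Bool →L[ℂ] MSpace 2 JK Bool}
  (hC21 : IsMFCreation β₁ 1 0 false JK21 C21) (hC21' : IsMFCreation β₁ 1 0 true JK21 C21')
  (hC22 : IsMFCreation β₂ 1 1 false JK22 C22) (hC22' : IsMFCreation β₂ 1 1 true JK22 C22')
include hC21 hC21' hC22 hC22'

theorem sOp_not_circularKesten_apply_stackBasis_nil (δ : Bool) :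
    sOp (!δ) (circularKesten C21 C21' C22 C22') (mvec (stackBasis []))
      = (Real.sqrt β₁ : ℂ) • mvec (stackBasis [δ]) := by
  cases δ <;>
    simp [sOp, circularKesten, ContinuousLinearMap.adjoint_adjoint, hC21.apply_stackBasis,
      hC21'.apply_stackBasis, hC22.apply_stackBasis, hC22'.apply_stackBasis,
      hC21.adjoint_apply_stackBasis_nil, hC21'.adjoint_apply_stackBasis_nil,
      hC22.adjoint_apply_stackBasis_nil, hC22'.adjoint_apply_stackBasis_nil, stackLevel]

theorem sOp_not_circularKesten_apply_stackBasis_cons (δ a : Bool) (t : List Bool) :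
    sOp (!δ) (circularKesten C21 C21' C22 C22') (mvec (stackBasis (a :: t)))
      = (Real.sqrt β₂ : ℂ) • mvec (stackBasis (δ :: a :: t))
        + if a ≠ δ then (Real.sqrt (levelWeight β₁ β₂ t) : ℂ) • mvec (stackBasis t) else 0 := by
  cases δ <;> cases a <;> cases t <;>
    simp [sOp, circularKesten, ContinuousLinearMap.adjoint_adjoint, hC21.apply_stackBasis,
      hC21'.apply_stackBasis, hC22.apply_stackBasis, hC22'.apply_stackBasis,
      hC21.adjoint_apply_stackBasis_cons, hC21'.adjoint_apply_stackBasis_cons,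
      hC22.adjoint_apply_stackBasis_cons, hC22'.adjoint_apply_stackBasis_cons, stackLevel,
      levelWeight] <;>
    abel

end KestenAction

end KestenFockSpace

/-- The weighted number of walks on stacks that read `E` letter by letter, start at the stack `t`
and end at the empty stack. A letter `δ` either pushes `δ`, with weight `√(levelWeight t)`, or
pops a top `a ≠ δ` off `a :: t'`, with weight `√(levelWeight t')`; the first `k` letters must
push. -/
noncomputable def walkSum (β₁ β₂ : ℝ) : ℕ → List Bool → List Bool → ℝ
  | _, t, [] => if t = [] then 1 else 0
  | 0, [], δ :: E => Real.sqrt β₁ * walkSum β₁ β₂ 0 [δ] E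
  | 0, a :: t, δ :: E => Real.sqrt β₂ * walkSum β₁ β₂ 0 (δ :: a :: t) E
      + if a ≠ δ then Real.sqrt (levelWeight β₁ β₂ t) * walkSum β₁ β₂ 0 t E else 0
  | k + 1, t, δ :: E => Real.sqrt (levelWeight β₁ β₂ t) * walkSum β₁ β₂ k (δ :: t) E

theorem inner_stackBasis_prod_sOp_circularKesten_apply_vac {β₁ β₂ : ℝ}
    {C21 C21' C22 C22' : MSpace 2 JK Bool →L[ℂ] MSpace 2 JK Bool}
    (hC21 : IsMFCreation β₁ 1 0 false JK21 C21) (hC21' : IsMFCreation β₁ 1 0 true JK21 C21')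
    (hC22 : IsMFCreation β₂ 1 1 false JK22 C22) (hC22' : IsMFCreation β₂ 1 1 true JK22 C22')
    (E t : List Bool) :
    ⟪mvec (stackBasis t),
        (E.map fun δ => sOp δ (circularKesten C21 C21' C22 C22')).prod (vac 0)⟫_ℂ
      = walkSum β₁ β₂ 0 t E := by
  induction E generalizing t with
  | nil =>
    rw [List.map_nil, List.prod_nil, one_apply_eq_self, vac, inner_mvec_mvec]
    cases t <;> simp [walkSum, stackBasis]
  | cons δ E ih =>
    rw [List.map_cons, List.prod_cons, mul_apply_eq_comp,
      ← ContinuousLinearMap.adjoint_inner_left, adjoint_sOp]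
    cases t with
    | nil =>
      rw [sOp_not_circularKesten_apply_stackBasis_nil hC21 hC21' hC22 hC22', inner_smul_left, ih]
      simp [walkSum]
    | cons a t =>
      rw [sOp_not_circularKesten_apply_stackBasis_cons hC21 hC21' hC22 hC22', inner_add_left,
        inner_smul_left, ih]
      split_ifs with h
      · rw [inner_smul_left, ih]
        simp [walkSum, h]
      · simp [walkSum, h]

section WalkRecursion

variable {β₁ β₂ : ℝ}

@[simp] theorem levelWeight_cons (a : Bool) (t : List Bool) : levelWeight β₁ β₂ (a :: t) = β₂ :=
  rfl

theorem levelWeight_eq_ite (t : List Bool) :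
    levelWeight β₁ β₂ t = if t = [] then β₁ else β₂ := by
  cases t <;> rfl

theorem levelWeight_nonneg (h₁ : 0 ≤ β₁) (h₂ : 0 ≤ β₂) (t : List Bool) :
    0 ≤ levelWeight β₁ β₂ t := by
  cases t <;> assumption

theorem walkSum_of_length_le {k : ℕ} {E : List Bool} (t : List Bool) (h : E.length ≤ k) :
    walkSum β₁ β₂ k t E = if E = [] ∧ t = [] then 1 else 0 := by
  induction E generalizing k t with
  | nil => cases k <;> simp [walkSum]
  | cons δ E ih =>
    obtain ⟨k, rfl⟩ : ∃ k', k = k' + 1 := ⟨k - 1, by simp at h; omega⟩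
    rw [walkSum, ih _ (by simpa using h)]
    simp

theorem walkSum_zero_nil (E : List Bool) : walkSum β₁ β₂ 0 [] E = walkSum β₁ β₂ 1 [] E := by
  cases E <;> rfl

/-- Allowing `y` to pop adds exactly the walks in which it pops the `x` pushed just before it;
deleting the pair `x y` from such a walk leaves a walk reading `A ++ E`. -/
theorem walkSum_append_cons_cons (h₁ : 0 ≤ β₁) (h₂ : 0 ≤ β₂) (A t : List Bool) (x y : Bool)
    (E : List Bool) :
    walkSum β₁ β₂ (A.length + 1) t (A ++ x :: y :: E)
      = walkSum β₁ β₂ (A.length + 2) t (A ++ x :: y :: E)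
        + if x ≠ y then levelWeight β₁ β₂ (A.reverse ++ t) * walkSum β₁ β₂ A.length t (A ++ E)
          else 0 := by
  induction A generalizing t with
  | nil =>
    have hsq := Real.mul_self_sqrt (levelWeight_nonneg h₁ h₂ t)
    simp only [List.length_nil, List.nil_append, List.reverse_nil, walkSum, levelWeight_cons]
    split_ifs
    · linear_combination (walkSum β₁ β₂ 0 t E) * hsq
    · ring
  | cons a A ih =>
    simp only [List.length_cons, List.cons_append, List.reverse_cons, List.append_assoc,
      List.nil_append, walkSum, ih]
    split_ifs <;> ring

end WalkRecursion

section PairPartitions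

open Finset

variable {n : ℕ}

noncomputable def partitionWeight (β₁ β₂ : ℝ) (σ : Fin n → Fin n) : ℝ :=
  ∏ i ∈ univ.filter (fun i => i < σ i), if outerCount σ i = 0 then β₁ else β₂

def OpensBelow (σ : Fin n → Fin n) (k : ℕ) : Prop :=
  ∀ i : Fin n, (i : ℕ) < k → i < σ i

noncomputable def adaptedSum (β₁ β₂ : ℝ) (ε : Fin n → Bool) (k : ℕ) : ℝ :=
  ∑ σ ∈ univ.filter (fun σ : Fin n → Fin n => IsAdaptedPairPartition σ ε ∧ OpensBelow σ k),
    partitionWeight β₁ β₂ σ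

variable {β₁ β₂ : ℝ}

theorem IsAdaptedPairPartition.lt_apply_iff {σ : Fin n → Fin n} {ε : Fin n → Bool}
    (hA : IsAdaptedPairPartition σ ε) (i : Fin n) : i < σ i ↔ ¬ σ i < i :=
  ⟨not_lt_of_gt, fun h => (not_lt.mp h).lt_of_ne (hA.2.1 i).symm⟩

theorem IsAdaptedPairPartition.apply_succ_eq {σ : Fin n → Fin n} {ε : Fin n → Bool}
    (hA : IsAdaptedPairPartition σ ε) {j : ℕ} (hj : j + 1 < n) (hopen : OpensBelow σ (j + 1))
    (hclose : σ ⟨j + 1, hj⟩ < ⟨j + 1, hj⟩) : σ ⟨j + 1, hj⟩ = ⟨j, by omega⟩ := by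
  obtain ⟨hinv, -, hnc, -⟩ := hA
  by_contra hne
  have hc : (σ ⟨j + 1, hj⟩ : ℕ) < j := by
    have : (σ ⟨j + 1, hj⟩ : ℕ) ≠ j := fun h => hne (Fin.ext h)
    have : (σ ⟨j + 1, hj⟩ : ℕ) < j + 1 := hclose
    omega
  have hσj : (σ ⟨j, by omega⟩ : ℕ) ≠ j + 1 := fun h => by
    have := congrArg σ (Fin.ext h : σ ⟨j, by omega⟩ = ⟨j + 1, hj⟩)
    rw [hinv] at this
    exact hne this.symm
  have hopen_j : j < (σ ⟨j, by omega⟩ : ℕ) := hopen ⟨j, by omega⟩ (by simp)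
  refine hnc ⟨σ ⟨j + 1, hj⟩, ⟨j, by omega⟩, hc, ?_, ?_⟩ <;> rw [hinv]
  · exact Fin.mk_lt_mk.mpr (by omega)
  · exact Fin.mk_lt_mk.mpr (by omega)

theorem adaptedSum_of_le (ε : Fin n → Bool) {k : ℕ} (hk : n ≤ k) :
    adaptedSum β₁ β₂ ε k = if n = 0 then 1 else 0 := by
  unfold adaptedSum
  rcases Nat.eq_zero_or_pos n with rfl | hn
  · have hall : ∀ σ : Fin 0 → Fin 0, IsAdaptedPairPartition σ ε ∧ OpensBelow σ k :=
      fun σ => ⟨⟨finZeroElim, finZeroElim, fun ⟨i, _⟩ => i.elim0, finZeroElim⟩,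
        finZeroElim⟩
    simp [hall, partitionWeight]
  · rw [if_neg hn.ne']
    refine sum_eq_zero fun σ hσ => absurd (mem_filter.mp hσ).2.2 fun hopen => ?_
    have hlast := hopen ⟨n - 1, by omega⟩ (by simp; omega)
    have : (σ ⟨n - 1, by omega⟩ : ℕ) < n := (σ _).isLt
    exact absurd hlast (by rw [Fin.lt_def]; simp only; omega)

theorem adaptedSum_zero (ε : Fin n → Bool) : adaptedSum β₁ β₂ ε 0 = adaptedSum β₁ β₂ ε 1 := by
  refine sum_congr (filter_congr fun σ _ => and_congr_right fun hA =>
    ⟨fun _ i hi => ?_, fun _ i hi => absurd hi (Nat.not_lt_zero _)⟩) fun _ _ => rfl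
  have : (σ i : ℕ) ≠ i := Fin.val_ne_of_ne (hA.2.1 i)
  exact Fin.lt_def.mpr (by omega)

def skipPair (j : ℕ) (i : Fin n) : Fin (n + 2) :=
  ⟨if (i : ℕ) < j then i else i + 2, by split_ifs <;> omega⟩

theorem val_skipPair (j : ℕ) (i : Fin n) :
    (skipPair j i : ℕ) = if (i : ℕ) < j then (i : ℕ) else i + 2 :=
  rfl

theorem skipPair_strictMono (j : ℕ) : StrictMono (skipPair (n := n) j) := by
  intro i i' h
  rw [Fin.lt_def, val_skipPair, val_skipPair]
  have : (i : ℕ) < i' := h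
  split_ifs <;> omega

theorem skipPair_lt_skipPair_iff {j : ℕ} {i i' : Fin n} :
    skipPair j i < skipPair j i' ↔ i < i' :=
  (skipPair_strictMono j).lt_iff_lt

theorem val_skipPair_ne (j : ℕ) (i : Fin n) :
    (skipPair j i : ℕ) ≠ j ∧ (skipPair j i : ℕ) ≠ j + 1 := by
  rw [val_skipPair]
  split_ifs <;> omega

theorem eq_or_eq_or_exists_skipPair_eq {j : ℕ} (hj : j ≤ n) (a : Fin (n + 2)) :
    a = ⟨j, by omega⟩ ∨ a = ⟨j + 1, by omega⟩ ∨ ∃ i, skipPair j i = a := by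
  by_cases h₁ : (a : ℕ) = j
  · exact Or.inl (Fin.ext h₁)
  by_cases h₂ : (a : ℕ) = j + 1
  · exact Or.inr (Or.inl (Fin.ext h₂))
  refine Or.inr (Or.inr ?_)
  by_cases h : (a : ℕ) < j
  · exact ⟨⟨a, by omega⟩, Fin.ext (by simp [val_skipPair, h])⟩
  · exact ⟨⟨a - 2, by omega⟩, Fin.ext (by rw [val_skipPair, if_neg (by simp; omega)]; simp; omega)⟩

noncomputable def insertPair (j : ℕ) (hj : j ≤ n) (σ : Fin n → Fin n) :
    Fin (n + 2) → Fin (n + 2) :=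
  fun a => if h : ∃ i, skipPair j i = a then skipPair j (σ h.choose)
    else if (a : ℕ) = j then ⟨j + 1, by omega⟩ else ⟨j, by omega⟩

section insertPair

variable {j : ℕ} (hj : j ≤ n) {σ : Fin n → Fin n}

@[simp] theorem insertPair_skipPair (i : Fin n) :
    insertPair j hj σ (skipPair j i) = skipPair j (σ i) := by
  have h : ∃ i', skipPair j i' = skipPair j i := ⟨i, rfl⟩
  rw [insertPair, dif_pos h, (skipPair_strictMono j).injective h.choose_spec]

@[simp] theorem insertPair_left : insertPair j hj σ ⟨j, by omega⟩ = ⟨j + 1, by omega⟩ := by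
  rw [insertPair, dif_neg (fun ⟨i, hi⟩ => (val_skipPair_ne j i).1 (congrArg Fin.val hi)),
    if_pos rfl]

@[simp] theorem insertPair_right : insertPair j hj σ ⟨j + 1, by omega⟩ = ⟨j, by omega⟩ := by
  rw [insertPair, dif_neg (fun ⟨i, hi⟩ => (val_skipPair_ne j i).2 (congrArg Fin.val hi)),
    if_neg (by simp)]

theorem insertPair_injective : Function.Injective (insertPair (n := n) j hj) := fun σ σ' h =>
  funext fun i => (skipPair_strictMono j).injective <| by
    simpa using congrFun h (skipPair j i)

theorem isAdaptedPairPartition_insertPair_iff {ε : Fin (n + 2) → Bool}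
    (hε : ε ⟨j, by omega⟩ ≠ ε ⟨j + 1, by omega⟩) :
    IsAdaptedPairPartition (insertPair j hj σ) ε ↔ IsAdaptedPairPartition σ (ε ∘ skipPair j) := by
  refine ⟨fun hA => ?_, fun hA => ?_⟩
  · obtain ⟨hinv, hne, hnc, hadapt⟩ := hA
    have hinj := (skipPair_strictMono (n := n) j).injective
    refine ⟨fun i => hinj ?_, fun i h => hne (skipPair j i) ?_, fun ⟨i, i', hii', hi'σ, hσ⟩ => ?_,
      fun i hi => ?_⟩
    · simpa using hinv (skipPair j i)
    · simp [h]
    · refine hnc ⟨skipPair j i, skipPair j i', ?_⟩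
      simpa [skipPair_lt_skipPair_iff] using ⟨hii', hi'σ, hσ⟩
    · simpa using hadapt (skipPair j i) (by simpa [skipPair_lt_skipPair_iff] using hi)
  · obtain ⟨hinv, hne, hnc, hadapt⟩ := hA
    have htri := eq_or_eq_or_exists_skipPair_eq hj
    refine ⟨fun a => ?_, fun a => ?_, ?_, fun a => ?_⟩
    · rcases htri a with rfl | rfl | ⟨i, rfl⟩ <;> simp [hinv]
    · rcases htri a with rfl | rfl | ⟨i, rfl⟩
      · simp [Fin.ext_iff]
      · simp [Fin.ext_iff]
      · simpa [(skipPair_strictMono j).injective.eq_iff] using hne i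
    · rintro ⟨a, b, hab, hba, hσ⟩
      rcases htri a with rfl | rfl | ⟨i, rfl⟩
      · simp only [insertPair_left, Fin.lt_def] at hab hba
        omega
      · simp only [insertPair_right, Fin.lt_def] at hab hba
        omega
      · rcases htri b with rfl | rfl | ⟨i', rfl⟩
        · simp only [insertPair_left, insertPair_skipPair, Fin.lt_def] at hba hσ
          omega
        · simp only [insertPair_right, insertPair_skipPair, Fin.lt_def] at hba hσ
          omega
        · simp only [insertPair_skipPair, skipPair_lt_skipPair_iff] at hab hba hσ
          exact hnc ⟨i, i', hab, hba, hσ⟩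
    · rcases htri a with rfl | rfl | ⟨i, rfl⟩
      · simpa using hε
      · simp [Fin.lt_def]
      · simpa [skipPair_lt_skipPair_iff] using hadapt i

theorem opensBelow_insertPair_iff :
    OpensBelow (insertPair j hj σ) (j + 1) ↔ OpensBelow σ j := by
  refine ⟨fun hopen => ?_, fun hopen => ?_⟩
  · intro i hi
    have := hopen (skipPair j i) (by rw [val_skipPair, if_pos hi]; omega)
    rwa [insertPair_skipPair, skipPair_lt_skipPair_iff] at this
  · intro a ha
    rcases eq_or_eq_or_exists_skipPair_eq hj a with rfl | rfl | ⟨i, rfl⟩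
    · simp [Fin.lt_def]
    · simp at ha
    · rw [insertPair_skipPair, skipPair_lt_skipPair_iff]
      refine hopen i ?_
      have := val_skipPair_ne j i
      rw [val_skipPair] at ha this
      split_ifs at ha this <;> omega

theorem exists_insertPair_eq {τ : Fin (n + 2) → Fin (n + 2)} (hinv : Function.Involutive τ)
    (hclose : τ ⟨j + 1, by omega⟩ = ⟨j, by omega⟩) : ∃ σ, insertPair j hj σ = τ := by
  have hopen : τ ⟨j, by omega⟩ = ⟨j + 1, by omega⟩ := by rw [← hclose, hinv]
  have hex : ∀ i, ∃ i', skipPair j i' = τ (skipPair j i) := fun i => by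
    rcases eq_or_eq_or_exists_skipPair_eq hj (τ (skipPair j i)) with h | h | h
    · have := (val_skipPair_ne j i).2
      rw [← hclose, hinv.injective.eq_iff] at h
      exact absurd (congrArg Fin.val h) this
    · have := (val_skipPair_ne j i).1
      rw [← hopen, hinv.injective.eq_iff] at h
      exact absurd (congrArg Fin.val h) this
    · exact h
  choose σ hσ using hex
  refine ⟨σ, funext fun a => ?_⟩
  rcases eq_or_eq_or_exists_skipPair_eq hj a with rfl | rfl | ⟨i, rfl⟩
  · rw [insertPair_left, hopen]
  · rw [insertPair_right, hclose]
  · rw [insertPair_skipPair, hσ]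

theorem outerCount_insertPair_skipPair {i : Fin n} (hi : i < σ i) :
    outerCount (insertPair j hj σ) (skipPair j i) = outerCount σ i := by
  unfold outerCount
  rw [← card_image_of_injective _ (skipPair_strictMono (n := n) j).injective]
  congr 1
  ext b
  simp only [mem_filter, mem_univ, true_and, mem_image]
  have hi' : (skipPair j i : ℕ) < skipPair j (σ i) := skipPair_lt_skipPair_iff.mpr hi
  have hne := val_skipPair_ne j (σ i)
  rcases eq_or_eq_or_exists_skipPair_eq hj b with rfl | rfl | ⟨i', rfl⟩
  · simp only [insertPair_left, insertPair_skipPair, Fin.lt_def]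
    refine iff_of_false (fun ⟨_, h₁, h₂⟩ => by omega) fun ⟨i', _, h⟩ => ?_
    exact (val_skipPair_ne j i').1 (congrArg Fin.val h)
  · simp only [insertPair_right, Fin.lt_def]
    refine iff_of_false (fun ⟨h, _⟩ => by omega) fun ⟨i', _, h⟩ => ?_
    exact (val_skipPair_ne j i').2 (congrArg Fin.val h)
  · simp [skipPair_lt_skipPair_iff, (skipPair_strictMono j).injective.eq_iff]

/-- The new block `{j, j + 1}` lies inside the block of position `0` unless `j = 0`. -/
theorem outerCount_insertPair_left_eq_zero_iff (hinv : Function.Involutive σ)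
    (hopen : OpensBelow σ j) : outerCount (insertPair j hj σ) ⟨j, by omega⟩ = 0 ↔ j = 0 := by
  refine ⟨fun h => ?_, fun h => ?_⟩
  · by_contra hj0
    have h0 : (0 : ℕ) < n := by omega
    have hσ0 : j ≤ (σ ⟨0, h0⟩ : ℕ) := by
      by_contra hlt
      have := hopen (σ ⟨0, h0⟩) (by omega)
      rw [hinv, Fin.lt_def] at this
      exact Nat.not_lt_zero _ this
    refine Finset.card_ne_zero_of_mem (a := skipPair j ⟨0, h0⟩) ?_ h
    have h00 := hopen ⟨0, h0⟩ (by simp only; omega)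
    simp only [mem_filter, mem_univ, true_and, insertPair_skipPair, insertPair_left, Fin.lt_def,
      val_skipPair] at h00 ⊢
    split_ifs <;> omega
  · subst h
    simp only [outerCount, card_eq_zero, filter_eq_empty_iff, Fin.lt_def]
    omega

theorem partitionWeight_insertPair (hinv : Function.Involutive σ)
    (hopen : OpensBelow σ j) :
    partitionWeight β₁ β₂ (insertPair j hj σ)
      = (if j = 0 then β₁ else β₂) * partitionWeight β₁ β₂ σ := by
  have hopeners : univ.filter (fun a => a < insertPair j hj σ a)
      = insert ⟨j, by omega⟩ ((univ.filter fun i => i < σ i).image (skipPair j)) := by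
    ext a
    simp only [mem_filter, mem_univ, true_and, mem_insert, mem_image]
    rcases eq_or_eq_or_exists_skipPair_eq hj a with rfl | rfl | ⟨i, rfl⟩
    · simp only [insertPair_left, Fin.lt_def, true_or, iff_true]
      omega
    · refine iff_of_false (by rw [insertPair_right, Fin.lt_def]; simp) ?_
      rintro (h | ⟨i, -, h⟩)
      · simp [Fin.ext_iff] at h
      · exact (val_skipPair_ne j i).2 (congrArg Fin.val h)
    · have hne : skipPair j i ≠ ⟨j, by omega⟩ := fun h =>
        (val_skipPair_ne j i).1 (congrArg Fin.val h)
      simp [skipPair_lt_skipPair_iff, (skipPair_strictMono j).injective.eq_iff, hne]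
  have hnew : (⟨j, by omega⟩ : Fin (n + 2)) ∉ (univ.filter fun i => i < σ i).image (skipPair j) :=
    fun h => by
      obtain ⟨i, -, hi⟩ := mem_image.mp h
      exact (val_skipPair_ne j i).1 (congrArg Fin.val hi)
  rw [partitionWeight, partitionWeight, hopeners, prod_insert hnew,
    prod_image fun _ _ _ _ h => (skipPair_strictMono j).injective h]
  simp only [outerCount_insertPair_left_eq_zero_iff hj hinv hopen]
  congr 1
  refine prod_congr rfl fun i hi => ?_
  rw [outerCount_insertPair_skipPair hj (mem_filter.mp hi).2]

end insertPair

theorem opensBelow_succ_iff {σ : Fin n → Fin n} {k : ℕ} (hk : k < n) :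
    OpensBelow σ (k + 1) ↔ OpensBelow σ k ∧ (⟨k, hk⟩ : Fin n) < σ ⟨k, hk⟩ := by
  refine ⟨fun h => ⟨fun i hi => h i (by omega), h _ (by simp)⟩, fun ⟨h, hk'⟩ i hi => ?_⟩
  rcases Nat.lt_succ_iff_lt_or_eq.mp hi with hi | hi
  · exact h i hi
  · obtain rfl : i = ⟨k, hk⟩ := Fin.ext hi
    exact hk'

theorem sum_partitionWeight_filter_apply_succ_eq {j : ℕ} (hj : j ≤ n) (ε : Fin (n + 2) → Bool) :
    ∑ τ ∈ univ.filter (fun τ : Fin (n + 2) → Fin (n + 2) =>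
        (IsAdaptedPairPartition τ ε ∧ OpensBelow τ (j + 1)) ∧
          τ ⟨j + 1, by omega⟩ = ⟨j, by omega⟩), partitionWeight β₁ β₂ τ
      = if ε ⟨j, by omega⟩ ≠ ε ⟨j + 1, by omega⟩ then
          (if j = 0 then β₁ else β₂) * adaptedSum β₁ β₂ (ε ∘ skipPair j) j else 0 := by
  by_cases hε : ε ⟨j, by omega⟩ ≠ ε ⟨j + 1, by omega⟩
  · rw [if_pos hε, adaptedSum, mul_sum]
    symm
    refine sum_bij (fun σ _ => insertPair j hj σ) (fun σ hσ => ?_)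
      (fun _ _ _ _ h => insertPair_injective hj h) (fun τ hτ => ?_) (fun σ hσ => ?_)
    · obtain ⟨hA, hopen⟩ := (mem_filter.mp hσ).2
      exact mem_filter.mpr ⟨mem_univ _, ⟨(isAdaptedPairPartition_insertPair_iff hj hε).mpr hA,
        (opensBelow_insertPair_iff hj).mpr hopen⟩, insertPair_right hj⟩
    · obtain ⟨⟨hA, hopen⟩, hclose⟩ := (mem_filter.mp hτ).2
      obtain ⟨σ, rfl⟩ := exists_insertPair_eq hj hA.1 hclose
      exact ⟨σ, mem_filter.mpr ⟨mem_univ _, (isAdaptedPairPartition_insertPair_iff hj hε).mp hA,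
        (opensBelow_insertPair_iff hj).mp hopen⟩, rfl⟩
    · obtain ⟨hA, hopen⟩ := (mem_filter.mp hσ).2
      exact (partitionWeight_insertPair hj hA.1 hopen).symm
  · rw [if_neg hε]
    refine sum_eq_zero fun τ hτ => absurd ?_ hε
    obtain ⟨⟨hA, -⟩, hclose⟩ := (mem_filter.mp hτ).2
    have hτj : τ ⟨j, by omega⟩ = ⟨j + 1, by omega⟩ := by rw [← hclose, hA.1]
    simpa [hτj] using hA.2.2.2 ⟨j, by omega⟩ (by rw [hτj]; simp [Fin.lt_def])

/-- Position `j + 1` either opens its block or closes `{j, j + 1}`: the counterpart of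
`walkSum_append_cons_cons`. -/
theorem adaptedSum_succ {j : ℕ} (hj : j ≤ n) (ε : Fin (n + 2) → Bool) :
    adaptedSum β₁ β₂ ε (j + 1)
      = adaptedSum β₁ β₂ ε (j + 2)
        + if ε ⟨j, by omega⟩ ≠ ε ⟨j + 1, by omega⟩ then
            (if j = 0 then β₁ else β₂) * adaptedSum β₁ β₂ (ε ∘ skipPair j) j else 0 := by
  rw [← sum_partitionWeight_filter_apply_succ_eq hj, adaptedSum, adaptedSum,
    ← sum_filter_add_sum_filter_not _
      fun τ => (⟨j + 1, by omega⟩ : Fin (n + 2)) < τ ⟨j + 1, by omega⟩,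
    filter_filter, filter_filter]
  congr 2
  · ext τ
    simp only [mem_filter, mem_univ, true_and, and_assoc,
      opensBelow_succ_iff (n := n + 2) (k := j + 1) (by omega)]
  · ext τ
    simp only [mem_filter, mem_univ, true_and]
    refine and_congr_right fun ⟨hA, hopen⟩ => ⟨fun h => ?_, fun h => ?_⟩
    · exact hA.apply_succ_eq (by omega) hopen (by simpa [hA.lt_apply_iff] using h)
    · simp [h, Fin.lt_def]

end PairPartitions

theorem List.ofFn_eq_take_append_cons_cons {α : Type*} {n j : ℕ} (hj : j ≤ n)
    (ε : Fin (n + 2) → α) :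
    List.ofFn ε = (List.ofFn (ε ∘ skipPair j)).take j
      ++ ε ⟨j, by omega⟩ :: ε ⟨j + 1, by omega⟩ :: (List.ofFn (ε ∘ skipPair j)).drop j := by
  refine List.ext_getElem (by simp; omega) fun i h₁ h₂ => ?_
  simp only [List.getElem_ofFn, List.getElem_append, List.length_take, List.length_ofFn,
    Nat.min_eq_left hj]
  split_ifs with h
  · simp only [List.getElem_take, List.getElem_ofFn, Function.comp_apply]
    congr 1
    ext
    simp [val_skipPair, h]
  · obtain ⟨d, rfl⟩ : ∃ d, i = j + d := ⟨i - j, by omega⟩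
    rcases d with _ | _ | d
    · simp
    · simp
    · simp only [Nat.add_sub_cancel_left, List.getElem_cons_succ, List.getElem_drop,
        List.getElem_ofFn, Function.comp_apply]
      congr 1
      ext
      simp [val_skipPair]
      omega

theorem walkSum_ofFn_eq_adaptedSum {β₁ β₂ : ℝ} (h₁ : 0 ≤ β₁) (h₂ : 0 ≤ β₂) {n : ℕ}
    (ε : Fin n → Bool) (k : ℕ) : walkSum β₁ β₂ k [] (List.ofFn ε) = adaptedSum β₁ β₂ ε k := by
  by_cases hnk : n ≤ k
  · rw [walkSum_of_length_le _ (by simpa using hnk), adaptedSum_of_le ε hnk]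
    simp [List.ofFn_eq_nil_iff]
  match k, hnk with
  | 0, _ =>
    rw [walkSum_zero_nil, adaptedSum_zero]
    exact walkSum_ofFn_eq_adaptedSum h₁ h₂ ε 1
  | j + 1, hnk =>
    obtain ⟨n, rfl⟩ : ∃ n', n = n' + 2 := ⟨n - 2, by omega⟩
    have hj : j ≤ n := by omega
    have hlen : ((List.ofFn (ε ∘ skipPair j)).take j).length = j := by simp; omega
    have hweight : levelWeight β₁ β₂ (((List.ofFn (ε ∘ skipPair j)).take j).reverse ++ [])
        = if j = 0 then β₁ else β₂ := by
      simp only [levelWeight_eq_ite, List.append_nil, ← List.length_eq_zero_iff,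
        List.length_reverse, hlen]
    have hstep := walkSum_append_cons_cons h₁ h₂ ((List.ofFn (ε ∘ skipPair j)).take j) []
      (ε ⟨j, by omega⟩) (ε ⟨j + 1, by omega⟩) ((List.ofFn (ε ∘ skipPair j)).drop j)
    rw [hlen, hweight, List.take_append_drop, ← List.ofFn_eq_take_append_cons_cons hj] at hstep
    rw [adaptedSum_succ hj, ← walkSum_ofFn_eq_adaptedSum h₁ h₂ ε (j + 2),
      ← walkSum_ofFn_eq_adaptedSum h₁ h₂ (ε ∘ skipPair j) j, hstep]
termination_by 2 * n - k

open Classical in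
/-- the *-moments of the circular Kesten operator
`ζ = ℘_{2,1}(u′) + ℘_{2,1}(u″)* + ℘_{2,2}(u′) + ℘_{2,2}(u″)*` associated with `(β₁,β₂)` in the
state `Ψ₁` are given by `Ψ₁(ζ^{ε₁}⋯ζ^{ε_m}) = Σ_π Π_{blocks} β_{min(𝔡(π_k),2)}`, summing over
noncrossing pair partitions adapted to `(ε₁,…,ε_m)`. -/
theorem circularKesten_moments
    (β₁ β₂ : ℝ) (hβ₁ : 0 < β₁) (hβ₂ : 0 < β₂)
    (C21 C21' C22 C22' : MSpace 2 JK Bool →L[ℂ] MSpace 2 JK Bool)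
    (hC21 : IsMFCreation β₁ 1 0 false JK21 C21)
    (hC21' : IsMFCreation β₁ 1 0 true JK21 C21')
    (hC22 : IsMFCreation β₂ 1 1 false JK22 C22)
    (hC22' : IsMFCreation β₂ 1 1 true JK22 C22') :
    ∀ (m : ℕ), 1 ≤ m → ∀ (ε : Fin m → Bool),
      PsiM 0 (List.ofFn (fun j => sOp (ε j)
          (C21 + ContinuousLinearMap.adjoint C21'
            + C22 + ContinuousLinearMap.adjoint C22'))).prod
        = ∑ σ ∈ Finset.univ.filter (fun σ : Fin m → Fin m => IsAdaptedPairPartition σ ε),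
            ∏ i ∈ Finset.univ.filter (fun i : Fin m => i < σ i),
              ((if outerCount σ i = 0 then β₁ else β₂ : ℝ) : ℂ) := by
  intro m _ ε
  calc PsiM 0 (List.ofFn fun j => sOp (ε j) (circularKesten C21 C21' C22 C22')).prod
      = ⟪mvec (stackBasis []), ((List.ofFn ε).map fun δ =>
          sOp δ (circularKesten C21 C21' C22 C22')).prod (vac 0)⟫_ℂ := by
        rw [List.map_ofFn]
        rfl
    _ = walkSum β₁ β₂ 0 [] (List.ofFn ε) :=
        inner_stackBasis_prod_sOp_circularKesten_apply_vac hC21 hC21' hC22 hC22' _ _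
    _ = adaptedSum β₁ β₂ ε 0 := by rw [walkSum_ofFn_eq_adaptedSum hβ₁.le hβ₂.le]
    _ = _ := by simp [adaptedSum, partitionWeight, OpensBelow]
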